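/- arXiv:2211.01032 — 6 statements merged into one kernel-verified Lean document; each statement's English description precedes it below -/
import Mathlib

section
/- For every integer n ≥ 1, the n-th harmonic number H_n satisfies H_n = ln(n + 1/2) + γ + ε_n, where γ is the Euler–Mascheroni constant and 1/(24(n+1)^2) ≤ ε_n ≤ 1/(24 n^2). -/
open Real

namespace HarmonicGammaAux

open Filter Topology

lemma pow_step (m : ℝ) (hm : 2 ≤ m) (k : ℕ) : 2 * m^k ≤ m^k * m := by
  have hm0 : (0:ℝ) < m := by linarith
  nlinarith [mul_nonneg (pow_pos hm0 k).le (by linarith : (0:ℝ) ≤ m - 2)]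

lemma key_low (m : ℝ) (hm : 2 ≤ m) :
    1/(24*m^2) - 1/(24*(m+1)^2) ≤
      2*(1/(2*m))^3/3 + 2*(1/(2*m))^5/5 - 2*(1/(2*m))^7/(1-1/(2*m)) := by
  have hm0 : (0:ℝ) < m := by linarith
  have h1 : (0:ℝ) < 2*m - 1 := by linarith
  have h3 : (1:ℝ) - 1/(2*m) = (2*m-1)/(2*m) := by field_simp
  rw [h3, ← sub_nonneg]
  have h1' : (2:ℝ)*m - 1 ≠ 0 := h1.ne'
  have h1'' : 0 < m*2 - 1 := by linarith
  field_simp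
  have p1 : 2*m^1 ≤ m^2 := by have := pow_step m hm 1; nlinarith
  have p2 : 2*m^2 ≤ m^3 := by have := pow_step m hm 2; nlinarith
  have p3 : 2*m^3 ≤ m^4 := by have := pow_step m hm 3; nlinarith
  have p4 : 2*m^4 ≤ m^5 := by have := pow_step m hm 4; nlinarith
  have p5 : 2*m^5 ≤ m^6 := by have := pow_step m hm 5; nlinarith
  have p11 : 2*m^11 ≤ m^12 := by have := pow_step m hm 11; nlinarith
  have p12 : 2*m^12 ≤ m^13 := by have := pow_step m hm 12; nlinarith
  have p13 : 2*m^13 ≤ m^14 := by have := pow_step m hm 13; nlinarith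
  have p14 : 2*m^14 ≤ m^15 := by have := pow_step m hm 14; nlinarith
  have p15 : 2*m^15 ≤ m^16 := by have := pow_step m hm 15; nlinarith
  have q11 : (0:ℝ) < m^11 := pow_pos hm0 11
  ring_nf
  linarith

lemma key_hi (m : ℝ) (hm : 2 ≤ m) :
    2*(1/(2*m))^3/3 + 2*(1/(2*m))^5/5 + 2*(1/(2*m))^7/(1-1/(2*m)) ≤
      1/(24*(m-1)^2) - 1/(24*m^2) := by
  have hm0 : (0:ℝ) < m := by linarith
  have h1 : (0:ℝ) < 2*m - 1 := by linarith
  have h2 : (0:ℝ) < m - 1 := by linarith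
  have h3 : (1:ℝ) - 1/(2*m) = (2*m-1)/(2*m) := by field_simp
  rw [h3, ← sub_nonneg]
  have h1' : (2:ℝ)*m - 1 ≠ 0 := h1.ne'
  have h1'' : 0 < m*2 - 1 := by linarith
  field_simp
  have p1 : 2*m^1 ≤ m^2 := by have := pow_step m hm 1; nlinarith
  have p2 : 2*m^2 ≤ m^3 := by have := pow_step m hm 2; nlinarith
  have p3 : 2*m^3 ≤ m^4 := by have := pow_step m hm 3; nlinarith
  have p4 : 2*m^4 ≤ m^5 := by have := pow_step m hm 4; nlinarith
  have p5 : 2*m^5 ≤ m^6 := by have := pow_step m hm 5; nlinarith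
  have p11 : 2*m^11 ≤ m^12 := by have := pow_step m hm 11; nlinarith
  have p12 : 2*m^12 ≤ m^13 := by have := pow_step m hm 12; nlinarith
  have p13 : 2*m^13 ≤ m^14 := by have := pow_step m hm 13; nlinarith
  have p14 : 2*m^14 ≤ m^15 := by have := pow_step m hm 14; nlinarith
  have p15 : 2*m^15 ≤ m^16 := by have := pow_step m hm 15; nlinarith
  have q11 : (0:ℝ) < m^11 := pow_pos hm0 11
  ring_nf
  linarith

lemma log_taylor (t : ℝ) (h0 : 0 ≤ t) (h1 : t < 1) :
    |Real.log (1+t) - Real.log (1-t) - (2*t + 2*t^3/3 + 2*t^5/5)| ≤ 2*t^7/(1-t) := by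
  have habs : |t| < 1 := by rw [abs_of_nonneg h0]; exact h1
  have habs' : |(-t)| < 1 := by rwa [abs_neg]
  have ha := Real.abs_log_sub_add_sum_range_le habs 6
  have hb := Real.abs_log_sub_add_sum_range_le habs' 6
  rw [abs_of_nonneg h0] at ha
  rw [abs_neg, abs_of_nonneg h0] at hb
  have e : Real.log (1+t) - Real.log (1-t) - (2*t + 2*t^3/3 + 2*t^5/5)
      = ((∑ i ∈ Finset.range 6, (-t)^(i+1)/(i+1)) + Real.log (1-(-t)))
        - ((∑ i ∈ Finset.range 6, t^(i+1)/(i+1)) + Real.log (1-t)) := by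
    simp only [Finset.sum_range_succ, Finset.sum_range_zero, sub_neg_eq_add]
    push_cast
    ring
  rw [e]
  refine (abs_sub _ _).trans ?_
  have h2 : 2*t^7/(1-t) = t^7/(1-t) + t^7/(1-t) := by ring
  rw [h2]
  exact add_le_add hb ha

lemma diff_bounds (m : ℝ) (hm : 2 ≤ m) :
    1/(24*m^2) - 1/(24*(m+1)^2) ≤ Real.log (m+1/2) - Real.log (m-1/2) - 1/m ∧
    Real.log (m+1/2) - Real.log (m-1/2) - 1/m ≤ 1/(24*(m-1)^2) - 1/(24*m^2) := by
  have hm0 : (0:ℝ) < m := by linarith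
  have ht0 : (0:ℝ) ≤ 1/(2*m) := by positivity
  have ht1 : 1/(2*m) < 1 := by rw [div_lt_one (by linarith)]; linarith
  have e1 : m + 1/2 = m * (1 + 1/(2*m)) := by field_simp
  have e2 : m - 1/2 = m * (1 - 1/(2*m)) := by field_simp
  have l1 : Real.log (m+1/2) = Real.log m + Real.log (1 + 1/(2*m)) := by
    rw [e1, Real.log_mul hm0.ne' (by nlinarith)]
  have l2 : Real.log (m-1/2) = Real.log m + Real.log (1 - 1/(2*m)) := by
    rw [e2, Real.log_mul hm0.ne' (by nlinarith)]
  have l3 : Real.log (m+1/2) - Real.log (m-1/2) - 1/m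
      = (Real.log (1+1/(2*m)) - Real.log (1-1/(2*m))
          - (2*(1/(2*m)) + 2*(1/(2*m))^3/3 + 2*(1/(2*m))^5/5))
        + (2*(1/(2*m))^3/3 + 2*(1/(2*m))^5/5) := by
    rw [l1, l2]; field_simp; ring
  have htay := log_taylor (1/(2*m)) ht0 ht1
  rw [abs_le] at htay
  have hlo := key_low m hm
  have hhi := key_hi m hm
  constructor
  · rw [l3]; linarith [htay.1]
  · rw [l3]; linarith [htay.2]

noncomputable def epsA (n : ℕ) : ℝ :=
  (harmonic n : ℝ) - Real.log (n + 1/2) - Real.eulerMascheroniConstant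

lemma epsA_tendsto : Filter.Tendsto epsA Filter.atTop (𝓝 0) := by
  have h1 := Real.tendsto_harmonic_sub_log
  have h2 := Real.tendsto_harmonic_sub_log_add_one
  have h3 : Tendsto (fun n : ℕ ↦ Real.log (n+1) - Real.log n) atTop (𝓝 0) := by
    have h := h1.sub h2
    rw [sub_self] at h
    exact h.congr (fun n => by ring)
  have h4 : Tendsto (fun n : ℕ ↦ Real.log (n + 1/2) - Real.log n) atTop (𝓝 0) := by
    apply tendsto_of_tendsto_of_tendsto_of_le_of_le' tendsto_const_nhds h3
    · filter_upwards [eventually_ge_atTop 1] with n hn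
      have hn0 : (0:ℝ) < n := by exact_mod_cast hn
      have := Real.log_le_log hn0 (by linarith : (n:ℝ) ≤ n + 1/2)
      linarith
    · filter_upwards [eventually_ge_atTop 1] with n hn
      have hn0 : (0:ℝ) < n := by exact_mod_cast hn
      have := Real.log_le_log (by linarith : (0:ℝ) < (n:ℝ) + 1/2)
        (by linarith : (n:ℝ) + 1/2 ≤ n + 1)
      linarith
  have h5 := (h1.sub h4).sub_const Real.eulerMascheroniConstant
  rw [sub_zero, sub_self] at h5
  exact h5.congr (fun n => by unfold epsA; ring)

lemma epsA_step (N : ℕ) (hN : 1 ≤ N) :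
    1/(24*((N:ℝ)+1)^2) - 1/(24*((N:ℝ)+2)^2) ≤ epsA N - epsA (N+1) ∧
    epsA N - epsA (N+1) ≤ 1/(24*(N:ℝ)^2) - 1/(24*((N:ℝ)+1)^2) := by
  have hm : (2:ℝ) ≤ (N:ℝ) + 1 := by
    have : (1:ℝ) ≤ N := by exact_mod_cast hN
    linarith
  have hd := diff_bounds ((N:ℝ)+1) hm
  have e : epsA N - epsA (N+1)
      = Real.log (((N:ℝ)+1)+1/2) - Real.log (((N:ℝ)+1)-1/2) - 1/((N:ℝ)+1) := by
    unfold epsA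
    rw [harmonic_succ]
    push_cast
    have e1 : ((N:ℝ)+1)+1/2 = (N:ℝ)+1+1/2 := by ring
    have e2 : ((N:ℝ)+1)-1/2 = (N:ℝ)+1/2 := by ring
    rw [e1, e2]
    ring
  constructor
  · rw [e]
    have : ((N:ℝ)+1)+1 = (N:ℝ)+2 := by ring
    rw [this] at hd
    exact hd.1
  · rw [e]
    have : ((N:ℝ)+1)-1 = (N:ℝ) := by ring
    rw [this] at hd
    exact hd.2

lemma epsA_partial (n : ℕ) (hn : 1 ≤ n) : ∀ N, n ≤ N →
    1/(24*((n:ℝ)+1)^2) - 1/(24*((N:ℝ)+1)^2) ≤ epsA n - epsA N ∧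
    epsA n - epsA N ≤ 1/(24*(n:ℝ)^2) - 1/(24*(N:ℝ)^2) := by
  intro N hN
  induction N, hN using Nat.le_induction with
  | base => constructor <;> simp
  | succ N hN ih =>
    have hstep := epsA_step N (le_trans hn hN)
    push_cast
    have ecast : ((N:ℝ)+1+1)^2 = ((N:ℝ)+2)^2 := by ring
    constructor
    · have := ih.1
      have h1 := hstep.1
      rw [ecast]
      linarith
    · have := ih.2
      have h2 := hstep.2
      linarith

lemma epsA_bounds (n : ℕ) (hn : 1 ≤ n) :
    1/(24*((n:ℝ)+1)^2) ≤ epsA n ∧ epsA n ≤ 1/(24*(n:ℝ)^2) := by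
  have hA : Tendsto (fun N : ℕ => epsA n - epsA N) atTop (𝓝 (epsA n)) := by
    have h := (tendsto_const_nhds : Tendsto (fun _ : ℕ => epsA n) atTop (𝓝 (epsA n))).sub
      epsA_tendsto
    simpa using h
  have hrecip : Tendsto (fun N : ℕ => 1/((N:ℝ)+1)) atTop (𝓝 0) :=
    tendsto_one_div_add_atTop_nhds_zero_nat
  have hF : Tendsto (fun N : ℕ => 1/(24*((N:ℝ)+1)^2)) atTop (𝓝 0) := by
    apply tendsto_of_tendsto_of_tendsto_of_le_of_le' tendsto_const_nhds hrecip
    · filter_upwards with N; positivity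
    · filter_upwards with N
      have h1 : (0:ℝ) < (N:ℝ)+1 := by positivity
      apply div_le_div_of_nonneg_left (by norm_num) h1
      nlinarith
  have hG : Tendsto (fun N : ℕ => 1/(24*(N:ℝ)^2)) atTop (𝓝 0) := by
    apply tendsto_of_tendsto_of_tendsto_of_le_of_le' tendsto_const_nhds hrecip
    · filter_upwards with N; positivity
    · filter_upwards [eventually_ge_atTop 1] with N hN
      have h1 : (1:ℝ) ≤ (N:ℝ) := by exact_mod_cast hN
      have h2 : (0:ℝ) < (N:ℝ)+1 := by positivity
      apply div_le_div_of_nonneg_left (by norm_num) h2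
      nlinarith
  have hF' : Tendsto (fun N : ℕ => 1/(24*((n:ℝ)+1)^2) - 1/(24*((N:ℝ)+1)^2)) atTop
      (𝓝 (1/(24*((n:ℝ)+1)^2))) := by
    have h := (tendsto_const_nhds :
      Tendsto (fun _ : ℕ => 1/(24*((n:ℝ)+1)^2)) atTop (𝓝 (1/(24*((n:ℝ)+1)^2)))).sub hF
    simpa using h
  have hG' : Tendsto (fun N : ℕ => 1/(24*(n:ℝ)^2) - 1/(24*(N:ℝ)^2)) atTop
      (𝓝 (1/(24*(n:ℝ)^2))) := by
    have h := (tendsto_const_nhds :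
      Tendsto (fun _ : ℕ => 1/(24*(n:ℝ)^2)) atTop (𝓝 (1/(24*(n:ℝ)^2)))).sub hG
    simpa using h
  constructor
  · refine le_of_tendsto_of_tendsto hF' hA ?_
    filter_upwards [eventually_ge_atTop n] with N hN
    exact (epsA_partial n hn N hN).1
  · refine le_of_tendsto_of_tendsto hA hG' ?_
    filter_upwards [eventually_ge_atTop n] with N hN
    exact (epsA_partial n hn N hN).2

end HarmonicGammaAux

theorem harmonic_eq_log_add_gamma (n : ℕ) (hn : 1 ≤ n) :
    ∃ ε : ℝ, (harmonic n : ℝ) = Real.log (n + 1/2) + Real.eulerMascheroniConstant + ε ∧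
      1 / (24 * (n + 1 : ℝ) ^ 2) ≤ ε ∧ ε ≤ 1 / (24 * (n : ℝ) ^ 2) := by
  refine ⟨HarmonicGammaAux.epsA n, by unfold HarmonicGammaAux.epsA; ring, ?_, ?_⟩
  · have := (HarmonicGammaAux.epsA_bounds n hn).1
    push_cast at this ⊢
    linarith
  · exact (HarmonicGammaAux.epsA_bounds n hn).2
end

section
/- For all integers n ≥ 10, 1 + H_{n−2} + (n/(n−2))·H_{n−3}·(H_{n−2} − 1) − ((n−3)/(n−2))·H_{n−3} < H_{n−3}·H_{n−2}. -/
lemma harmonic_mono' : Monotone harmonic :=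
  monotone_nat_of_le_succ fun n => by
    rw [harmonic_succ]; exact le_add_of_nonneg_right (by positivity)

lemma key1 (d a : ℝ) (hd : 8 ≤ d) (hl : 363/140 ≤ a) (hu : a ≤ 761/280) :
    2*a^2 + 2*a/d + (d+1) < (d+1)*a := by
  have hd0 : 0 < d := by linarith
  have h1 : 2*a/d ≤ a/4 := by
    rw [div_le_div_iff₀ hd0 (by norm_num)]
    nlinarith
  nlinarith [mul_nonneg (by linarith : (0:ℝ) ≤ a - 363/140) (by linarith : (0:ℝ) ≤ 761/280 - a),
    mul_nonneg (by linarith : (0:ℝ) ≤ d - 8) (by linarith : (0:ℝ) ≤ a - 1)]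

lemma key2 (d a : ℝ) (hd : 10 ≤ d) (hl : 14/5 ≤ a) (hu : a ≤ 403/100) :
    2*a^2 + 2*a/d + (d+1) < (d+1)*a := by
  have hd0 : 0 < d := by linarith
  have h1 : 2*a/d ≤ a/5 := by
    rw [div_le_div_iff₀ hd0 (by norm_num)]
    nlinarith
  nlinarith [mul_nonneg (by linarith : (0:ℝ) ≤ a - 14/5) (by linarith : (0:ℝ) ≤ 403/100 - a),
    mul_nonneg (by linarith : (0:ℝ) ≤ d - 10) (by linarith : (0:ℝ) ≤ a - 1)]

lemma key3 (d a : ℝ) (hd : 33 ≤ d) (hl : 81/20 ≤ a) (hu : a ≤ (d+1)/4) :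
    2*a^2 + 2*a/d + (d+1) < (d+1)*a := by
  have hd0 : 0 < d := by linarith
  have h1 : 2*a/d ≤ a/16 := by
    rw [div_le_div_iff₀ hd0 (by norm_num)]
    nlinarith
  nlinarith [mul_nonneg (by linarith : (0:ℝ) ≤ a - 81/20) (by linarith : (0:ℝ) ≤ (d+1)/4 - a),
    mul_nonneg (by linarith : (0:ℝ) ≤ d - 33) (by linarith : (0:ℝ) ≤ a - 1)]

theorem logsq_final_ineq (n : ℕ) (hn : 10 ≤ n) :
    1 + (harmonic (n - 2) : ℝ) +
      ((n : ℝ) / ((n : ℝ) - 2)) * (harmonic (n - 3) : ℝ) * ((harmonic (n - 2) : ℝ) - 1) -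
      (((n : ℝ) - 3) / ((n : ℝ) - 2)) * (harmonic (n - 3) : ℝ) <
    (harmonic (n - 3) : ℝ) * (harmonic (n - 2) : ℝ) := by
  set A : ℝ := (harmonic (n - 3) : ℝ) with hA
  set B : ℝ := (harmonic (n - 2) : ℝ) with hB
  set d : ℝ := (n : ℝ) - 2 with hdd
  have hd8 : (8:ℝ) ≤ d := by
    have : (10:ℝ) ≤ (n:ℝ) := by exact_mod_cast hn
    simp [hdd]; linarith
  have hd0 : (0:ℝ) < d := by linarith
  have hBA : B = A + 1/d := by
    have h1 : n - 2 = (n - 3) + 1 := by omega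
    have h2 : ((n - 3 + 1 : ℕ) : ℚ) = ((n:ℚ) - 2) := by
      push_cast [Nat.cast_sub (by omega : 3 ≤ n)]; ring
    rw [hB, hA, h1, harmonic_succ, h2]
    push_cast
    rw [hdd]
    push_cast
    ring
  -- key inequality
  have key : 2*A^2 + 2*A/d + (d+1) < (d+1)*A := by
    rcases le_or_gt n 11 with h11 | h12
    · -- n ∈ {10, 11}, n - 3 ∈ {7, 8}
      apply key1 d A hd8
      · have h7 : (363/140 : ℚ) ≤ harmonic (n - 3) := by
          have := harmonic_mono' (by omega : 7 ≤ n - 3)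
          have h7 : harmonic 7 = 363/140 := by norm_num [harmonic, Finset.sum_range_succ]
          linarith
        have h7' : ((363/140 : ℚ) : ℝ) ≤ ((harmonic (n - 3) : ℚ) : ℝ) := by exact_mod_cast h7
        rw [← hA] at h7'; push_cast at h7'; linarith
      · have h8 : harmonic (n - 3) ≤ (761/280 : ℚ) := by
          have := harmonic_mono' (by omega : n - 3 ≤ 8)
          have h8 : harmonic 8 = 761/280 := by norm_num [harmonic, Finset.sum_range_succ]
          linarith
        have h8' : ((harmonic (n - 3) : ℚ) : ℝ) ≤ ((761/280 : ℚ) : ℝ) := by exact_mod_cast h8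
        rw [← hA] at h8'; push_cast at h8'; linarith
    · rcases le_or_gt n 34 with h34 | h35
      · apply key2 d A
        · have : (12:ℝ) ≤ (n:ℝ) := by exact_mod_cast h12
          rw [hdd]; linarith
        · have h9 : (14/5:ℚ) ≤ harmonic (n - 3) := by
            have := harmonic_mono' (by omega : 9 ≤ n - 3)
            have h9 : (14/5:ℚ) ≤ harmonic 9 := by norm_num [harmonic, Finset.sum_range_succ]
            linarith
          have h9' : ((14/5 : ℚ) : ℝ) ≤ ((harmonic (n - 3) : ℚ) : ℝ) := by exact_mod_cast h9
          rw [← hA] at h9'; push_cast at h9'; linarith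
        · have h31 : harmonic (n - 3) ≤ (403/100:ℚ) := by
            have := harmonic_mono' (by omega : n - 3 ≤ 31)
            have h31 : harmonic 31 ≤ (403/100:ℚ) := by norm_num [harmonic, Finset.sum_range_succ]
            linarith
          have h31' : ((harmonic (n - 3) : ℚ) : ℝ) ≤ ((403/100 : ℚ) : ℝ) := by exact_mod_cast h31
          rw [← hA] at h31'; push_cast at h31'; linarith
      · apply key3 d A
        · have : (35:ℝ) ≤ (n:ℝ) := by exact_mod_cast h35
          rw [hdd]; linarith
        · have h32 : (81/20:ℚ) ≤ harmonic (n - 3) := by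
            have := harmonic_mono' (by omega : 32 ≤ n - 3)
            have h32 : (81/20:ℚ) ≤ harmonic 32 := by norm_num [harmonic, Finset.sum_range_succ]
            linarith
          have h32' : ((81/20 : ℚ) : ℝ) ≤ ((harmonic (n - 3) : ℚ) : ℝ) := by exact_mod_cast h32
          rw [← hA] at h32'; push_cast at h32'; linarith
        · -- A ≤ (d+1)/4 via log bound
          have hle := harmonic_le_one_add_log (n - 3)
          have hcast : ((n - 3 : ℕ) : ℝ) = (n:ℝ) - 3 := by
            push_cast [Nat.cast_sub (by omega : 3 ≤ n)]; ring
          have hn3pos : (0:ℝ) < (n:ℝ) - 3 := by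
            have : (35:ℝ) ≤ (n:ℝ) := by exact_mod_cast h35
            linarith
          have hlog : Real.log ((n:ℝ) - 3) ≤ Real.log 32 + ((n:ℝ) - 3)/32 - 1 := by
            have h := Real.log_le_sub_one_of_pos (show (0:ℝ) < ((n:ℝ) - 3)/32 by positivity)
            have heq : Real.log (((n:ℝ) - 3)/32) = Real.log ((n:ℝ) - 3) - Real.log 32 := by
              rw [Real.log_div (by linarith) (by norm_num)]
            rw [heq] at h
            linarith
          have hlog32 : Real.log 32 ≤ 3.47 := by
            have h2 : Real.log 32 = 5 * Real.log 2 := by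
              rw [show (32:ℝ) = 2^5 by norm_num, Real.log_pow]; push_cast; ring
            have := Real.log_two_lt_d9
            rw [h2]; nlinarith
          have hn35 : (35:ℝ) ≤ (n:ℝ) := by exact_mod_cast h35
          rw [hcast, ← hA] at hle
          rw [hdd]
          linarith
  -- conclude
  have hdiff : (1 + B + ((n : ℝ) / ((n : ℝ) - 2)) * A * (B - 1) -
      (((n : ℝ) - 3) / ((n : ℝ) - 2)) * A) - A * B =
      (2*A^2 + 2*A/d + (d+1) - (d+1)*A)/d := by
    rw [hBA, hdd]
    have hne : (n:ℝ) - 2 ≠ 0 := by rw [hdd] at hd0; linarith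
    field_simp
    ring
  have hneg : (2*A^2 + 2*A/d + (d+1) - (d+1)*A)/d < 0 :=
    div_neg_of_neg_of_pos (by linarith) hd0
  linarith [hdiff ▸ hneg]
end

section
/- Let 1/2 < ν < 1 and let n be large enough that νn − 5/2 > 0. The function f(t) = ln((νn − 3/2)/(νn − 3/2 − t))/t² is convex on the real interval [1, νn − 2). -/
open Real Set

lemma key_log_ineq (u : ℝ) (hu : 0 ≤ u) : 4*u - u^2 ≤ 6 * Real.log (1+u) := by
  set w := Real.sqrt (1+u) with hw
  have h1u : (0:ℝ) < 1 + u := by linarith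
  have hw1 : 1 ≤ w := by
    rw [hw]
    nlinarith [Real.sq_sqrt h1u.le, Real.sqrt_nonneg (1+u)]
  have hwsq : w^2 = 1 + u := Real.sq_sqrt h1u.le
  have hlog : Real.log (1+u) = 2 * Real.log w := by
    rw [← hwsq, Real.log_pow]; push_cast; ring
  have hlb : 1 - w⁻¹ ≤ Real.log w := Real.one_sub_inv_le_log_of_pos (by linarith)
  have hwpos : (0:ℝ) < w := by linarith
  have hstep : 12 * (1 - w⁻¹) ≤ 6 * Real.log (1+u) := by
    rw [hlog]; linarith
  refine le_trans ?_ hstep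
  have hu' : u = w^2 - 1 := by linarith
  have hdiff : 12 * (1 - w⁻¹) - (4*u - u^2)
      = (w - 1) * (w^4 + w^3 - 5*w^2 - 5*w + 12) / w := by
    rw [hu']; field_simp; ring
  have hpoly : 0 ≤ w^4 + w^3 - 5*w^2 - 5*w + 12 := by
    nlinarith [sq_nonneg (w^2 + w/2 - 3), sq_nonneg (w - 3/2), sq_nonneg (w-1), sq_nonneg w]
  have : 0 ≤ (w - 1) * (w^4 + w^3 - 5*w^2 - 5*w + 12) / w :=
    div_nonneg (mul_nonneg (by linarith) hpoly) hwpos.le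
  linarith [hdiff ▸ this]


lemma aux_convex (A : ℝ) (hA : 1 < A) :
    ConvexOn ℝ (Set.Ico (1 : ℝ) (A - 1/2))
      (fun t : ℝ => (Real.log A - Real.log (A - t)) / t ^ 2) := by
  set g : ℝ → ℝ := fun t => (Real.log A - Real.log (A - t)) / t ^ 2 with hg
  set g1 : ℝ → ℝ := fun x =>
      ((A - x)⁻¹ * x ^ 2 - (Real.log A - Real.log (A - x)) * (2 * x)) / (x ^ 2) ^ 2 with hg1
  set g2 : ℝ → ℝ := fun x =>
      (((A - x)⁻¹ ^ 2 * x ^ 2 - 2 * (Real.log A - Real.log (A - x))) * (x ^ 2) ^ 2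
        - ((A - x)⁻¹ * x ^ 2 - (Real.log A - Real.log (A - x)) * (2 * x))
          * (2 * (x ^ 2) * (2 * x))) / ((x ^ 2) ^ 2) ^ 2 with hg2
  have hD1 : ∀ x : ℝ, 0 < x → x < A → HasDerivAt g (g1 x) x := by
    intro x hx0 hxA
    have hs : (0:ℝ) < A - x := by linarith
    have hN : HasDerivAt (fun t => Real.log A - Real.log (A - t)) ((A - x)⁻¹) x := by
      have h1 : HasDerivAt (fun t : ℝ => A - t) (-1) x := by
        simpa using (hasDerivAt_id' x).const_sub A
      have h2 := h1.log (by linarith)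
      have h3 := (hasDerivAt_const x (Real.log A)).sub h2
      refine h3.congr_deriv ?_
      ring
    have hDen : HasDerivAt (fun t : ℝ => t ^ 2) (2 * x) x := by
      simpa using hasDerivAt_pow 2 x
    have h := hN.div hDen (by positivity)
    exact h
  have hD2 : ∀ x : ℝ, 0 < x → x < A → HasDerivAt g1 (g2 x) x := by
    intro x hx0 hxA
    have hs : (0:ℝ) < A - x := by linarith
    have hinv : HasDerivAt (fun t : ℝ => (A - t)⁻¹) ((A - x)⁻¹ ^ 2) x := by
      have h1 : HasDerivAt (fun t : ℝ => A - t) (-1) x := by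
        simpa using (hasDerivAt_id' x).const_sub A
      have h2 := h1.inv (by linarith)
      refine h2.congr_deriv ?_
      rw [inv_pow]; ring
    have hpow : HasDerivAt (fun t : ℝ => t ^ 2) (2 * x) x := by
      simpa using hasDerivAt_pow 2 x
    have hL : HasDerivAt (fun t => Real.log A - Real.log (A - t)) ((A - x)⁻¹) x := by
      have h1 : HasDerivAt (fun t : ℝ => A - t) (-1) x := by
        simpa using (hasDerivAt_id' x).const_sub A
      have h2 := h1.log (by linarith)
      have h3 := (hasDerivAt_const x (Real.log A)).sub h2
      refine h3.congr_deriv ?_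
      ring
    have hN1 : HasDerivAt
        (fun t => (A - t)⁻¹ * t ^ 2 - (Real.log A - Real.log (A - t)) * (2 * t))
        ((A - x)⁻¹ ^ 2 * x ^ 2 - 2 * (Real.log A - Real.log (A - x))) x := by
      have ha := hinv.mul hpow
      have hb := hL.mul ((hasDerivAt_id x).const_mul 2)
      have hc := ha.sub hb
      refine hc.congr_deriv ?_
      simp only [id]; ring
    have hDen : HasDerivAt (fun t : ℝ => (t ^ 2) ^ 2) (2 * (x ^ 2) * (2 * x)) x := by
      have := hpow.pow 2
      refine this.congr_deriv ?_
      norm_num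
    have h := hN1.div hDen (by positivity)
    exact h
  have hmem : ∀ x ∈ Set.Ioo (1:ℝ) (A - 1/2), 0 < x ∧ x < A := by
    intro x hx
    exact ⟨by linarith [hx.1], by linarith [hx.2]⟩
  have hint : interior (Set.Ico (1:ℝ) (A - 1/2)) = Set.Ioo (1:ℝ) (A - 1/2) :=
    interior_Ico
  refine convexOn_of_hasDerivWithinAt2_nonneg (f' := g1) (f'' := g2) (convex_Ico _ _) ?_ ?_ ?_ ?_
  · intro x hx
    have hx0 : 0 < x := by linarith [hx.1]
    have hxA : x < A := by
      rcases hx with ⟨_, h2⟩; linarith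
    exact ((hD1 x hx0 hxA).differentiableAt.continuousAt).continuousWithinAt
  · intro x hx
    rw [hint] at hx ⊢
    obtain ⟨hx0, hxA⟩ := hmem x hx
    exact (hD1 x hx0 hxA).hasDerivWithinAt
  · intro x hx
    rw [hint] at hx ⊢
    obtain ⟨hx0, hxA⟩ := hmem x hx
    exact (hD2 x hx0 hxA).hasDerivWithinAt
  · intro x hx
    rw [hint] at hx
    obtain ⟨hx0, hxA⟩ := hmem x hx
    have hs : (0:ℝ) < A - x := by linarith
    set u : ℝ := x / (A - x) with hu
    have hu0 : 0 ≤ u := by positivity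
    have hL : Real.log A - Real.log (A - x) = Real.log (1 + u) := by
      rw [hu, ← Real.log_div (by linarith) (by linarith)]
      congr 1
      field_simp
      ring
    have hkey := key_log_ineq u hu0
    have hx0' : x ≠ 0 := by linarith
    have hsimp : (((A - x)⁻¹ ^ 2 * x ^ 2 - 2 * (Real.log A - Real.log (A - x))) * (x ^ 2) ^ 2
        - ((A - x)⁻¹ * x ^ 2 - (Real.log A - Real.log (A - x)) * (2 * x))
          * (2 * (x ^ 2) * (2 * x))) / ((x ^ 2) ^ 2) ^ 2
        = (u ^ 2 - 4 * u + 6 * Real.log (1 + u)) / x ^ 4 := by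
      rw [hL, hu]
      field_simp
      ring
    have hval : g2 x = (u ^ 2 - 4 * u + 6 * Real.log (1 + u)) / x ^ 4 := hsimp
    show 0 ≤ g2 x
    rw [hval]
    apply div_nonneg _ (by positivity)
    linarith

theorem f_convex (ν n : ℝ) (hν1 : 1/2 < ν) (hν2 : ν < 1) (hn : ν * n - 5/2 > 0) :
    ConvexOn ℝ (Set.Ico (1 : ℝ) (ν * n - 2))
      (fun t : ℝ => Real.log ((ν * n - 3/2) / (ν * n - 3/2 - t)) / t ^ 2) := by
  have hA : 1 < ν * n - 3/2 := by linarith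
  have haux := aux_convex (ν * n - 3/2) hA
  have hset : Set.Ico (1:ℝ) ((ν * n - 3/2) - 1/2) = Set.Ico (1 : ℝ) (ν * n - 2) := by
    ring_nf
  rw [hset] at haux
  refine haux.congr fun x hx => ?_
  have hx2 : x < ν * n - 2 := hx.2
  rw [Real.log_div (by linarith) (by intro h; nlinarith)]
end

section
/- The function g(x) = x^{-2} · ln(1/(1−x)) is convex on the open interval (0, 1). -/
/-!
Expanding the logarithm, `log (1 / (1 - x)) / x ^ 2 = ∑ₙ x ^ (n - 1) / (n + 1)` on `(0, 1)`, and every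
term is a nonnegative multiple of a power `x ^ m` (`m ≥ -1`), which is convex on `(0, ∞)`. A pointwise
sum of convex functions is convex, since the convexity inequalities sum termwise.
-/

open Set Real

theorem convexOn_of_hasSum {𝕜 E β ι : Type*} [Semiring 𝕜] [PartialOrder 𝕜]
    [AddCommMonoid E] [SMul 𝕜 E] [AddCommMonoid β] [PartialOrder β] [IsOrderedAddMonoid β]
    [Module 𝕜 β] [TopologicalSpace β] [OrderClosedTopology β] [ContinuousAdd β]
    [ContinuousConstSMul 𝕜 β] {s : Set E} {f : ι → E → β} {F : E → β} (hs : Convex 𝕜 s)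
    (hf : ∀ i, ConvexOn 𝕜 s (f i)) (hF : ∀ x ∈ s, HasSum (fun i ↦ f i x) (F x)) :
    ConvexOn 𝕜 s F :=
  ⟨hs, fun x hx y hy a b ha hb hab ↦
    hasSum_le (fun i ↦ (hf i).2 hx hy ha hb hab) (hF _ (hs hx hy ha hb hab))
      (((hF x hx).const_smul a).add ((hF y hy).const_smul b))⟩

theorem hasSum_zpow_div_log_div_sq_of_abs_lt_one {x : ℝ} (hx : |x| < 1) (hx0 : x ≠ 0) :
    HasSum (fun n : ℕ ↦ x ^ ((n : ℤ) - 1) / (n + 1)) (-log (1 - x) / x ^ 2) := by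
  refine ((hasSum_pow_div_log_of_abs_lt_one hx).div_const (x ^ 2)).congr_fun fun n ↦ ?_
  rw [zpow_sub₀ hx0, zpow_one, zpow_natCast]
  field_simp
  ring

theorem g_convex :
    ConvexOn ℝ (Set.Ioo (0 : ℝ) 1)
      (fun x : ℝ => Real.log (1 / (1 - x)) / x ^ 2) := by
  refine convexOn_of_hasSum (convex_Ioo 0 1)
    (f := fun (n : ℕ) (x : ℝ) ↦ x ^ ((n : ℤ) - 1) / (n + 1)) (fun n ↦ ?_) fun x hx ↦ ?_
  · simp_rw [div_eq_inv_mul]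
    exact ((convexOn_zpow _).smul (by positivity)).subset Ioo_subset_Ioi_self (convex_Ioo 0 1)
  · rw [one_div, log_inv]
    exact hasSum_zpow_div_log_div_sq_of_abs_lt_one (abs_lt.2 ⟨by linarith [hx.1], hx.2⟩) hx.1.ne'
end

section
/- For every real ν with 1/2 < ν ≤ 1 and every real n with νn > 4, ln(2νn − 3)/(νn − 2)² ≤ (ln(2νn)/(ν²n²))·(1 + 4/(νn − 4)). -/
theorem claim_Mk1 (ν n : ℝ) (hν1 : 1/2 < ν) (hν2 : ν ≤ 1) (hn : ν * n > 4) :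
    Real.log (2 * ν * n - 3) / (ν * n - 2) ^ 2 ≤
      (Real.log (2 * ν * n) / (ν ^ 2 * n ^ 2)) * (1 + 4 / (ν * n - 4)) := by
  have hx : ν * n > 4 := hn
  have hlogle : Real.log (2 * ν * n - 3) ≤ Real.log (2 * ν * n) := by
    apply Real.log_le_log (by nlinarith) (by nlinarith)
  have key : Real.log (2 * ν * n - 3) / (ν * n - 2) ^ 2 ≤
      Real.log (2 * ν * n) / ((ν * n) * (ν * n - 4)) := by
    apply div_le_div₀ (Real.log_nonneg (by nlinarith)) hlogle (by nlinarith) (by nlinarith)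
  have heq : (Real.log (2 * ν * n) / (ν ^ 2 * n ^ 2)) * (1 + 4 / (ν * n - 4)) =
      Real.log (2 * ν * n) / ((ν * n) * (ν * n - 4)) := by
    have h1 : ν * n ≠ 0 := by nlinarith
    have h2 : ν * n - 4 ≠ 0 := by nlinarith
    have h3 : ν ≠ 0 := by nlinarith
    have h4 : n ≠ 0 := by intro h; rw [h] at hx; simp at hx; linarith
    field_simp
    ring
  linarith [key, heq.ge, heq.le]
end

section
/- For all integers m ≥ 1 and 1 ≤ k ≤ m, the inequality (1/(2k)) · ((2m)(2m−4)(2m−6)···(2m−2k)) / ((2m−1)(2m−3)···(2m−2k+1)) ≥ (1/(2k))·(m−k)/m holds, and summing over k from 1 to m gives ∑_{k=1}^{m} (1/(2k))·(m−k)/m ≥ (1/2)(H_m − 1). -/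
/-!
Write `r_k` for the ratio on the left. Passing from `k` to `k + 1` multiplies it by
`(2n - 2) / (2n - 1)` with `n = m - k`, while `(m - k) / m` is multiplied by `(n - 1) / n`,
which is smaller because `(n - 1)(2n - 1) ≤ n(2n - 2)` for `n ≥ 1`. The sum is
`∑ (1/(2k) - 1/(2m)) = H_m / 2 - 1 / 2`.
-/

open Finset

noncomputable def evenOddRatio (m k : ℕ) : ℝ :=
  ((2 * m : ℝ) * ∏ i ∈ Icc 2 k, ((2 * m : ℝ) - 2 * i)) /
    ∏ i ∈ Icc 1 k, ((2 * m : ℝ) - 2 * i + 1)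

lemma prod_Icc_two_mul_sub_add_one_pos {m k : ℕ} (hk : k ≤ m) :
    0 < ∏ i ∈ Icc 1 k, ((2 * m : ℝ) - 2 * i + 1) := by
  refine prod_pos fun i hi => ?_
  have : (i : ℝ) ≤ m := by exact_mod_cast (mem_Icc.1 hi).2.trans hk
  linarith

lemma evenOddRatio_one (m : ℕ) : evenOddRatio m 1 = 2 * m / (2 * m - 1) := by
  rw [evenOddRatio, Icc_eq_empty (by omega), prod_empty, Icc_self, prod_singleton]
  push_cast
  ring

lemma evenOddRatio_succ {m k : ℕ} (hk : 1 ≤ k) (hkm : k < m) :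
    evenOddRatio m (k + 1) =
      evenOddRatio m k * ((2 * m - 2 * (k + 1)) / (2 * m - 2 * (k + 1) + 1)) := by
  have hD := prod_Icc_two_mul_sub_add_one_pos hkm.le
  have hkm' : (k : ℝ) + 1 ≤ m := by exact_mod_cast hkm
  rw [evenOddRatio, evenOddRatio, prod_Icc_succ_top (by omega), prod_Icc_succ_top (by omega)]
  push_cast
  field_simp

lemma sub_one_div_le_mul_of_div_le {x y r : ℝ} (hx : 1 ≤ x) (hy : 0 < y) (h : x / y ≤ r) :
    (x - 1) / y ≤ r * ((2 * x - 2) / (2 * x - 1)) := by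
  have hfactor : (x - 1) / x ≤ (2 * x - 2) / (2 * x - 1) := by
    rw [div_le_div_iff₀ (by linarith) (by linarith)]
    nlinarith
  calc (x - 1) / y = x / y * ((x - 1) / x) := by field_simp
    _ ≤ r * ((2 * x - 2) / (2 * x - 1)) :=
      mul_le_mul h hfactor (div_nonneg (by linarith) (by linarith))
        ((div_nonneg (by linarith) hy.le).trans h)

lemma sub_div_le_evenOddRatio {m k : ℕ} (hk : 1 ≤ k) (hkm : k ≤ m) :
    ((m : ℝ) - k) / m ≤ evenOddRatio m k := by
  have hm : (1 : ℝ) ≤ m := by exact_mod_cast hk.trans hkm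
  induction k, hk using Nat.le_induction with
  | base =>
    rw [evenOddRatio_one, div_le_div_iff₀ (by linarith) (by linarith)]
    nlinarith
  | succ k hk ih =>
    have hkm' : (k : ℝ) + 1 ≤ m := by exact_mod_cast hkm
    rw [evenOddRatio_succ hk hkm]
    convert sub_one_div_le_mul_of_div_le (x := m - k) (by linarith) (by linarith) (ih (by omega))
      using 2 <;> push_cast <;> ring

lemma sum_Icc_inv_two_mul_mul_sub_div (m : ℕ) :
    ∑ k ∈ Icc 1 m, 1 / (2 * (k : ℝ)) * (((m : ℝ) - k) / m) =
      1 / 2 * (harmonic m : ℝ) - m / (2 * m) := by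
  have hterm : ∀ k ∈ Icc 1 m, 1 / (2 * (k : ℝ)) * (((m : ℝ) - k) / m) =
      1 / 2 * (k : ℝ)⁻¹ - 1 / (2 * m) := by
    intro k hk
    have hk1 : (1 : ℝ) ≤ k := by exact_mod_cast (mem_Icc.1 hk).1
    have hm : (1 : ℝ) ≤ m := by exact_mod_cast (mem_Icc.1 hk).1.trans (mem_Icc.1 hk).2
    field_simp
  rw [sum_congr rfl hterm, sum_sub_distrib, ← mul_sum, sum_const, Nat.card_Icc,
    harmonic_eq_sum_Icc]
  push_cast
  ring

theorem lower_bound_ratio_general (m : ℕ) :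
    (∀ k, 1 ≤ k → k ≤ m →
      (1 / (2 * (k : ℝ))) *
          (((2 * m : ℝ) * ∏ i ∈ Icc 2 k, ((2 * m : ℝ) - 2 * i)) /
            (∏ i ∈ Icc 1 k, ((2 * m : ℝ) - 2 * i + 1))) ≥
        (1 / (2 * (k : ℝ))) * (((m : ℝ) - k) / m)) ∧
    (∑ k ∈ Icc 1 m, (1 / (2 * (k : ℝ))) * (((m : ℝ) - k) / m) ≥
      (1/2) * ((harmonic m : ℝ) - 1)) := by
  refine ⟨fun k hk hkm =>
    mul_le_mul_of_nonneg_left (sub_div_le_evenOddRatio hk hkm) (by positivity), ?_⟩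
  have hhalf : (m : ℝ) / (2 * m) ≤ 1 / 2 := by
    rcases Nat.eq_zero_or_pos m with rfl | hm
    · norm_num
    · rw [div_le_div_iff₀ (by positivity) two_pos]
      linarith
  rw [ge_iff_le, sum_Icc_inv_two_mul_mul_sub_div]
  linarith

theorem lower_bound_ratio (m : ℕ) (hm : 1 ≤ m) :
    (∀ k, 1 ≤ k → k ≤ m →
      (1 / (2 * (k : ℝ))) *
          (((2 * m : ℝ) * ∏ i ∈ Icc 2 k, ((2 * m : ℝ) - 2 * i)) /
            (∏ i ∈ Icc 1 k, ((2 * m : ℝ) - 2 * i + 1))) ≥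
        (1 / (2 * (k : ℝ))) * (((m : ℝ) - k) / m)) ∧
    (∑ k ∈ Icc 1 m, (1 / (2 * (k : ℝ))) * (((m : ℝ) - k) / m) ≥
      (1/2) * ((harmonic m : ℝ) - 1)) :=
  lower_bound_ratio_general m
end
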